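/- Let s ≥ 0, let E ⊆ ℝⁿ be ℋ^s_w-measurable with ℋ^s_w(E) < ∞, and let 𝒱 be a Vitali class of closed sets for E w.r.t. w. Then for every ε > 0 one may select a finite or countable pairwise disjoint sequence {Uᵢ} of sets from 𝒱 such that either Σᵢ (diam_w Uᵢ)^s = ∞ or ℋ^s_w(E \ ⋃ᵢ Uᵢ) = 0, and moreover ℋ^s_w(E) ≤ Σᵢ (diam_w Uᵢ)^s + ε. -/

import Mathlib

open MeasureTheory Set ENNReal NNReal

noncomputable section

/-- Points of `ℝⁿ` with the Euclidean norm. -/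
abbrev Pt (n : ℕ) := EuclideanSpace ℝ (Fin n)

/-- The action of an `n × n` real matrix on Euclidean space. -/
def mapp {n : ℕ} (A : Matrix (Fin n) (Fin n) ℝ) (x : Pt n) : Pt n :=
  Matrix.toEuclideanLin A x

/-- A real matrix is expanding if all of its (complex) eigenvalues have modulus `> 1`. -/
def IsExpandingMatrix {n : ℕ} (A : Matrix (Fin n) (Fin n) ℝ) : Prop :=
  ∀ μ ∈ spectrum ℂ (A.map (fun a => (a : ℂ))), 1 < ‖μ‖

/-- The diameter of a set with respect to the pseudo norm `w`. -/
def pdiam {n : ℕ} (w : Pt n → ℝ) (E : Set (Pt n)) : ℝ≥0∞ :=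
  ⨆ (x ∈ E) (y ∈ E), ENNReal.ofReal (w (x - y))

/-- The `δ`-approximation of the `s`-dimensional pseudo Hausdorff measure. -/
def preHw {n : ℕ} (w : Pt n → ℝ) (s δ : ℝ) (E : Set (Pt n)) : ℝ≥0∞ :=
  ⨅ (U : ℕ → Set (Pt n)) (_ : E ⊆ ⋃ i, U i)
    (_ : ∀ i, pdiam w (U i) ≤ ENNReal.ofReal δ), ∑' i, pdiam w (U i) ^ s

/-- The `s`-dimensional pseudo Hausdorff measure w.r.t. the pseudo norm `w`. -/
def Hw {n : ℕ} (w : Pt n → ℝ) (s : ℝ) (E : Set (Pt n)) : ℝ≥0∞ :=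
  ⨆ (δ : ℝ) (_ : 0 < δ), preHw w s δ E

/-- Carathéodory measurability with respect to the outer measure `Hw w s`. -/
def HwMeasurable {n : ℕ} (w : Pt n → ℝ) (s : ℝ) (E : Set (Pt n)) : Prop :=
  ∀ T : Set (Pt n), Hw w s T = Hw w s (T ∩ E) + Hw w s (T \ E)

/-- A pseudo norm associated with the expanding matrix `A`. -/
structure IsPseudoNorm {n : ℕ} (A : Matrix (Fin n) (Fin n) ℝ) (w : Pt n → ℝ) : Prop where
  continuous : Continuous w
  nonneg : ∀ x, 0 ≤ w x
  neg : ∀ x, w (-x) = w x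
  eq_zero_iff : ∀ x, w x = 0 ↔ x = 0
  scaling : ∀ x, w (mapp A x) = |A.det| ^ ((1 : ℝ) / n) * w x
  quasi_triangle : ∃ β > (0 : ℝ), ∀ x y, w (x + y) ≤ β * max (w x) (w y)
  comparable : ∃ C > (0 : ℝ), ∃ α₁ > (0 : ℝ), ∃ α₂ > (0 : ℝ),
    (∀ x : Pt n, 1 < ‖x‖ → C⁻¹ * ‖x‖ ^ α₁ ≤ w x ∧ w x ≤ C * ‖x‖ ^ α₂) ∧
    (∀ x : Pt n, ‖x‖ ≤ 1 → C⁻¹ * ‖x‖ ^ α₂ ≤ w x ∧ w x ≤ C * ‖x‖ ^ α₁)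

/-- The map `f_d(x) = A⁻¹(x + d)` of the self-affine IFS. -/
def fIFS {n : ℕ} (A : Matrix (Fin n) (Fin n) ℝ) (d : Pt n) (x : Pt n) : Pt n :=
  mapp A⁻¹ (x + d)

/-- The open set condition for the IFS `{f_d}_{d ∈ D}`. -/
def OSC {n : ℕ} (A : Matrix (Fin n) (Fin n) ℝ) (D : Finset (Pt n)) : Prop :=
  ∃ V : Set (Pt n), V.Nonempty ∧ IsOpen V ∧ Bornology.IsBounded V ∧
    (⋃ d ∈ D, fIFS A d '' V) ⊆ V ∧
    ∀ d ∈ D, ∀ d' ∈ D, d ≠ d' → fIFS A d '' V ∩ fIFS A d' '' V = ∅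

/-- `K` is the self-affine set (attractor) for the pair `(A, D)`:
a nonempty compact set with `A K = ⋃_{d ∈ D} (K + d)`. -/
def IsSelfAffineSet {n : ℕ} (A : Matrix (Fin n) (Fin n) ℝ) (D : Finset (Pt n))
    (K : Set (Pt n)) : Prop :=
  K.Nonempty ∧ IsCompact K ∧ mapp A '' K = ⋃ d ∈ D, (fun x => x + d) '' K

/-- The set `𝒟_M` of `M`-fold expansions `Σ_{j<M} A^j d_j`. -/
def DsetM {n : ℕ} (A : Matrix (Fin n) (Fin n) ℝ) (D : Finset (Pt n)) (M : ℕ) :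
    Set (Pt n) :=
  {x | ∃ d : Fin M → Pt n, (∀ j, d j ∈ D) ∧ x = ∑ j : Fin M, mapp (A ^ (j : ℕ)) (d j)}

/-- The set `𝒟_∞ = ⋃_{M ≥ 1} 𝒟_M`. -/
def DsetInf {n : ℕ} (A : Matrix (Fin n) (Fin n) ℝ) (D : Finset (Pt n)) : Set (Pt n) :=
  ⋃ (M : ℕ) (_ : 1 ≤ M), DsetM A D M

/-- A set is uniformly discrete if distinct points are uniformly separated. -/
def UniformlyDiscrete {n : ℕ} (S : Set (Pt n)) : Prop :=
  ∃ δ > (0 : ℝ), ∀ x ∈ S, ∀ y ∈ S, x ≠ y → δ < ‖x - y‖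

/-- `σ` is the invariant (self-affine) probability measure of the IFS `{f_d}_{d ∈ D}`. -/
def IsInvariantMeasure {n : ℕ} (A : Matrix (Fin n) (Fin n) ℝ) (D : Finset (Pt n))
    (σ : Measure (Pt n)) : Prop :=
  IsProbabilityMeasure σ ∧
  ∀ f : Pt n → ℝ, Continuous f → HasCompactSupport f →
    ∫ x, f x ∂σ = ((D.card : ℝ))⁻¹ * ∑ d ∈ D, ∫ x, f (fIFS A d x) ∂σ

/-- The measure `μ_M = Σ_{d_0,…,d_{M−1} ∈ 𝒟} δ_{d_0 + A d_1 + ⋯ + A^{M−1} d_{M−1}}`. -/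
def muM {n : ℕ} (A : Matrix (Fin n) (Fin n) ℝ) (D : Finset (Pt n)) (M : ℕ) :
    Measure (Pt n) :=
  ∑ d ∈ (Finset.univ : Finset (Fin M → {x : Pt n // x ∈ D})),
    Measure.dirac (∑ j : Fin M, mapp (A ^ (j : ℕ)) ((d j : Pt n)))

/-- Convolution of two Borel measures on `ℝⁿ`. -/
def mconv {n : ℕ} (μ ν : Measure (Pt n)) : Measure (Pt n) :=
  Measure.map (fun p : Pt n × Pt n => p.1 + p.2) (μ.prod ν)

/-- The upper `s`-density `ℰ⁺_{w,s}(ν)` of a Borel measure `ν` w.r.t. the pseudo norm `w`. -/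
def upperDensity {n : ℕ} (w : Pt n → ℝ) (s : ℝ) (ν : Measure (Pt n)) : ℝ≥0∞ :=
  ⨅ (r : ℝ) (_ : 0 < r),
    ⨆ (U : Set (Pt n)) (_ : IsCompact U) (_ : Convex ℝ U)
      (_ : ENNReal.ofReal r ≤ pdiam w U), ν U / pdiam w U ^ s

/-- The upper convex `s`-density `D^s_{w,c}(E, x)` of `E` at `x` w.r.t. `w`. -/
def upperConvexDensity {n : ℕ} (w : Pt n → ℝ) (s : ℝ) (E : Set (Pt n)) (x : Pt n) :
    ℝ≥0∞ :=
  ⨅ (r : ℝ) (_ : 0 < r),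
    ⨆ (U : Set (Pt n)) (_ : Convex ℝ U) (_ : x ∈ U) (_ : 0 < pdiam w U)
      (_ : pdiam w U ≤ ENNReal.ofReal r), Hw w s (E ∩ U) / pdiam w U ^ s

/-- The pseudo Hausdorff dimension `dim_H^w E = inf {s ≥ 0 : ℋ^s_w(E) = 0}`. -/
def dimHw {n : ℕ} (w : Pt n → ℝ) (E : Set (Pt n)) : ℝ≥0∞ :=
  ⨅ (t : ℝ≥0) (_ : Hw w (t : ℝ) E = 0), (t : ℝ≥0∞)

/-- `𝒱` is a Vitali class for `E` w.r.t. `w`. -/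
def VitaliClass {n : ℕ} (w : Pt n → ℝ) (𝒱 : Set (Set (Pt n))) (E : Set (Pt n)) : Prop :=
  ∀ x ∈ E, ∀ δ : ℝ, 0 < δ →
    ∃ U ∈ 𝒱, x ∈ U ∧ 0 < pdiam w U ∧ pdiam w U ≤ ENNReal.ofReal δ

/-- The composite map `f_𝐢 = f_{i₁} ∘ ⋯ ∘ f_{i_m}` associated with a word of digits. -/
def fWord {n : ℕ} (A : Matrix (Fin n) (Fin n) ℝ) (i : List (Pt n)) (x : Pt n) : Pt n :=
  i.foldr (fun d y => fIFS A d y) x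

/-!
Select greedily from the members of `𝒱` of `w`-diameter at most `η` that avoid the sets already
chosen, each time one whose diameter is at least half the supremum. If the chosen `Uᵢ` have
`Σ (diam_w Uᵢ)^s < ∞`, then every point of `E` outside `U₀ ∪ ⋯ ∪ U_{m-1}` lies, by closedness and
the Vitali property, in an admissible set avoiding these; that set must meet some later `Uⱼ` of at
least half its diameter, so by the quasi-triangle inequality it lies in the enlargement of `Uⱼ`,
of diameter at most `2β² · diam_w Uⱼ`. Covering `E` by `U₀, …, U_{m-1}` and the later enlargements
bounds `ℋ^s_{w,δ}(E)` by `Σ (diam_w Uᵢ)^s` plus `(2β²)^s` times a tail of that series; letting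
`m → ∞` gives both conclusions once `δ` is chosen with `ℋ^s_w(E) ≤ ℋ^s_{w,δ}(E) + ε` and
`η = δ / (2β²)`.
-/

open Function Filter Topology

section Greedy

variable {X : Type*}

theorem exists_mem_forall_le_two_mul {ι : Type*} {s : Set ι} {f : ι → ℝ≥0∞} (hs : s.Nonempty)
    (hf : ⨆ i ∈ s, f i ≠ ⊤) : ∃ i ∈ s, ∀ j ∈ s, f j ≤ 2 * f i := by
  have hle : ∀ j ∈ s, f j ≤ ⨆ i ∈ s, f i := fun j hj => le_iSup₂ (f := fun j _ => f j) j hj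
  rcases eq_or_ne (⨆ i ∈ s, f i) 0 with h0 | h0
  · obtain ⟨i, hi⟩ := hs
    exact ⟨i, hi, fun j hj => (hle j hj).trans (by rw [h0]; exact zero_le)⟩
  · obtain ⟨i, hi, hlt⟩ : ∃ i ∈ s, (⨆ i ∈ s, f i) / 2 < f i := by
      simpa only [lt_iSup_iff, exists_prop] using ENNReal.half_lt_self h0 hf
    rw [ENNReal.div_lt_iff (Or.inl two_ne_zero) (Or.inl ENNReal.ofNat_ne_top), mul_comm] at hlt
    exact ⟨i, hi, fun j hj => (hle j hj).trans hlt.le⟩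

theorem exists_pairwise_disjoint_seq_two_mul_le (𝒞 : Set (Set X)) (d : Set X → ℝ≥0∞)
    (hd : ⨆ V ∈ 𝒞, d V ≠ ⊤) :
    ∃ U : ℕ → Set X, (∀ i, U i ∈ 𝒞 ∨ U i = ∅) ∧ Pairwise (Disjoint on U) ∧
      ∀ m, ∀ V ∈ 𝒞, (∀ i < m, Disjoint V (U i)) → d V ≤ 2 * d (U m) := by
  have step : ∀ S : Set X, ∃ U, (U ∈ 𝒞 ∨ U = ∅) ∧ Disjoint U S ∧
      ∀ V ∈ 𝒞, Disjoint V S → d V ≤ 2 * d U := by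
    intro S
    by_cases h : ∃ V ∈ 𝒞, Disjoint V S
    · obtain ⟨U, ⟨hU, hUS⟩, hmax⟩ := exists_mem_forall_le_two_mul
        (s := {V ∈ 𝒞 | Disjoint V S}) (f := d)
        (by simpa only [Set.Nonempty, Set.mem_ofPred_eq] using h)
        (ne_top_of_le_ne_top hd (biSup_mono fun _ h => h.1))
      exact ⟨U, Or.inl hU, hUS, fun V hV hVS => hmax V ⟨hV, hVS⟩⟩
    · exact ⟨∅, Or.inr rfl, Set.empty_disjoint S, fun V hV hVS => (h ⟨V, hV, hVS⟩).elim⟩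
  choose pick hpick hdisj hmax using step
  let S : ℕ → Set X := fun m => Nat.rec ∅ (fun _ T => T ∪ pick T) m
  have hS : ∀ m, S m = ⋃ i < m, pick (S i) := by
    intro m
    induction m with
    | zero => simp [S]
    | succ m ih => rw [Set.biUnion_lt_succ, ← ih]
  refine ⟨fun m => pick (S m), fun i => hpick _, ?_, fun m V hV hVm => hmax _ V hV ?_⟩
  · refine (pairwise_disjoint_on _).2 fun i j hij => (hdisj (S j)).symm.mono_left ?_
    rw [hS j]
    exact Set.subset_iUnion₂ (s := fun k (_ : k < j) => pick (S k)) i hij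
  · rw [hS m]
    exact Set.disjoint_iUnion₂_right.2 hVm

theorem exists_le_not_disjoint_of_tsum_ne_top {𝒞 : Set (Set X)} {d : Set X → ℝ≥0∞}
    {U : ℕ → Set X} (hmax : ∀ m, ∀ V ∈ 𝒞, (∀ i < m, Disjoint V (U i)) → d V ≤ 2 * d (U m))
    {s : ℝ} (hs : 0 < s) (hT : ∑' i, d (U i) ^ s ≠ ⊤) {V : Set X} (hV : V ∈ 𝒞)
    (hV0 : d V ≠ 0) {m : ℕ} (hm : ∀ i < m, Disjoint V (U i)) :
    ∃ j, m ≤ j ∧ ¬Disjoint V (U j) ∧ d V ≤ 2 * d (U j) := by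
  classical
  have hmeet : ∃ j, ¬Disjoint V (U j) := by
    by_contra! hdisj
    refine hT (top_unique ?_)
    calc ⊤ = ∑' _ : ℕ, (d V / 2) ^ s :=
          (ENNReal.tsum_const_eq_top_of_ne_zero
            (by simp [ENNReal.rpow_eq_zero_iff, hV0, hs.le])).symm
      _ ≤ ∑' i, d (U i) ^ s := ENNReal.tsum_le_tsum fun i => ENNReal.rpow_le_rpow ?_ hs.le
    rw [ENNReal.div_le_iff two_ne_zero ENNReal.ofNat_ne_top, mul_comm]
    exact hmax i V hV fun k _ => hdisj k
  refine ⟨Nat.find hmeet, ?_, Nat.find_spec hmeet,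
    hmax _ V hV fun i hi => not_not.1 (Nat.find_min hmeet hi)⟩
  by_contra! hlt
  exact Nat.find_spec hmeet (hm _ hlt)

theorem tsum_image_nonempty {ι : Type*} {U : ι → Set X} (hU : Pairwise (Disjoint on U))
    {f : Set X → ℝ≥0∞} (hf : f ∅ = 0) :
    ∑' V : U '' {i | (U i).Nonempty}, f V = ∑' i, f (U i) := by
  have hinj : Set.InjOn U {i | (U i).Nonempty} := fun i hi j _ hij => by
    by_contra hne
    have h : Disjoint (U i) (U j) := hU hne
    rw [hij, disjoint_self, Set.bot_eq_empty] at h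
    exact hi.ne_empty (hij.trans h)
  rw [tsum_image f hinj]
  refine tsum_subtype_eq_of_support_subset (f := fun i => f (U i)) fun i hi => ?_
  by_contra h
  simp [Set.not_nonempty_iff_eq_empty.1 h, hf] at hi

theorem sUnion_image_nonempty {ι : Type*} (U : ι → Set X) :
    ⋃₀ (U '' {i | (U i).Nonempty}) = ⋃ i, U i := by
  ext x
  simp only [Set.sUnion_image, Set.mem_iUnion, Set.mem_ofPred_eq, exists_prop]
  exact ⟨fun ⟨i, _, hx⟩ => ⟨i, hx⟩, fun ⟨i, hx⟩ => ⟨i, ⟨x, hx⟩, hx⟩⟩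

end Greedy

theorem ENNReal.tsum_rpow_le_rpow_mul_tsum {ι : Type*} {f g : ι → ℝ≥0∞} {c : ℝ≥0∞} {s : ℝ}
    (hs : 0 ≤ s) (h : ∀ i, f i ≤ c * g i) : ∑' i, f i ^ s ≤ c ^ s * ∑' i, g i ^ s := by
  rw [← ENNReal.tsum_mul_left]
  exact ENNReal.tsum_le_tsum fun i =>
    (ENNReal.rpow_le_rpow (h i) hs).trans_eq (ENNReal.mul_rpow_of_nonneg _ _ hs)

theorem ENNReal.tendsto_mul_tsum_nat_add {f : ℕ → ℝ≥0∞} (hf : ∑' i, f i ≠ ⊤) {a : ℝ≥0∞}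
    (ha : a ≠ ⊤) : Tendsto (fun m => a * ∑' i, f (i + m)) atTop (𝓝 0) := by
  simpa using ENNReal.Tendsto.const_mul (ENNReal.tendsto_sum_nat_add f hf) (Or.inr ha)

section PseudoNorm

variable {n : ℕ} {w : Pt n → ℝ}

theorem le_pdiam {U : Set (Pt n)} {x y : Pt n} (hx : x ∈ U) (hy : y ∈ U) :
    ENNReal.ofReal (w (x - y)) ≤ pdiam w U :=
  (le_iSup₂ (f := fun y (_ : y ∈ U) => ENNReal.ofReal (w (x - y))) y hy).trans
    (le_iSup₂ (f := fun x (_ : x ∈ U) => ⨆ y ∈ U, ENNReal.ofReal (w (x - y))) x hx)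

theorem pdiam_le {U : Set (Pt n)} {a : ℝ≥0∞}
    (h : ∀ x ∈ U, ∀ y ∈ U, ENNReal.ofReal (w (x - y)) ≤ a) : pdiam w U ≤ a :=
  iSup₂_le fun x hx => iSup₂_le fun y hy => h x hx y hy

@[simp]
theorem pdiam_empty : pdiam w (∅ : Set (Pt n)) = 0 := by
  simp [pdiam]

def enlarge (w : Pt n → ℝ) (U : Set (Pt n)) : Set (Pt n) :=
  {y | ∃ u ∈ U, ENNReal.ofReal (w (y - u)) ≤ 2 * pdiam w U}

theorem subset_enlarge_of_not_disjoint {U V : Set (Pt n)} (h : ¬Disjoint V U)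
    (hVU : pdiam w V ≤ 2 * pdiam w U) : V ⊆ enlarge w U := by
  obtain ⟨z, hzV, hzU⟩ := Set.not_disjoint_iff.1 h
  exact fun y hy => ⟨z, hzU, (le_pdiam hy hzV).trans hVU⟩

theorem pdiam_enlarge_le {β : ℝ} (hβ1 : 1 ≤ β) (hβ : ∀ x y, w (x + y) ≤ β * max (w x) (w y))
    (hneg : ∀ x, w (-x) = w x) (U : Set (Pt n)) :
    pdiam w (enlarge w U) ≤ ENNReal.ofReal (2 * β ^ 2) * pdiam w U := by
  have hβ0 : 0 ≤ β := zero_le_one.trans hβ1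
  set p := pdiam w U
  set b := ENNReal.ofReal β
  have hb1 : 1 ≤ b := ENNReal.one_le_ofReal.2 hβ1
  refine pdiam_le fun y ⟨u, hu, hyu⟩ y' ⟨u', hu', hyu'⟩ => ?_
  have hquasi : w (y - y') ≤ β * max (w (y - u)) (β * max (w (u - u')) (w (u' - y'))) := by
    rw [show y - y' = (y - u) + ((u - u') + (u' - y')) by abel]
    exact (hβ _ _).trans (by gcongr; exact hβ _ _)
  have huu' : ENNReal.ofReal (w (u - u')) ≤ 2 * p :=
    (le_pdiam hu hu').trans (le_mul_of_one_le_left' one_le_two)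
  have hu'y' : ENNReal.ofReal (w (u' - y')) ≤ 2 * p := by
    rwa [← neg_sub, hneg]
  calc ENNReal.ofReal (w (y - y'))
      ≤ ENNReal.ofReal (β * max (w (y - u)) (β * max (w (u - u')) (w (u' - y')))) :=
        ENNReal.ofReal_le_ofReal hquasi
    _ = b * max (ENNReal.ofReal (w (y - u)))
          (b * max (ENNReal.ofReal (w (u - u'))) (ENNReal.ofReal (w (u' - y')))) := by
        rw [ENNReal.ofReal_mul hβ0, ENNReal.ofReal_max, ENNReal.ofReal_mul hβ0, ENNReal.ofReal_max]
    _ ≤ b * max (2 * p) (b * max (2 * p) (2 * p)) := by gcongr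
    _ = 2 * b ^ 2 * p := by
        rw [max_self, max_eq_right (le_mul_of_one_le_left' hb1)]; ring
    _ = ENNReal.ofReal (2 * β ^ 2) * p := by
        rw [ENNReal.ofReal_mul zero_le_two, ENNReal.ofReal_pow hβ0, ENNReal.ofReal_ofNat]

variable {A : Matrix (Fin n) (Fin n) ℝ}

theorem IsPseudoNorm.exists_pdiam_enlarge_le (hw : IsPseudoNorm A w) :
    ∃ c ≥ (1 : ℝ), ∀ U, pdiam w (enlarge w U) ≤ ENNReal.ofReal c * pdiam w U := by
  obtain ⟨β, -, hβ⟩ := hw.quasi_triangle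
  have hβ' : ∀ x y, w (x + y) ≤ max β 1 * max (w x) (w y) := fun x y =>
    (hβ x y).trans (mul_le_mul_of_nonneg_right (le_max_left β 1)
      ((hw.nonneg x).trans (le_max_left _ _)))
  exact ⟨2 * max β 1 ^ 2, by nlinarith [le_max_right β 1],
    pdiam_enlarge_le (le_max_right β 1) hβ' hw.neg⟩

theorem IsPseudoNorm.exists_pos_le_of_le_norm (hw : IsPseudoNorm A w) {r : ℝ} (hr : 0 < r) :
    ∃ c > 0, ∀ z, r ≤ ‖z‖ → c ≤ w z := by
  obtain ⟨C, hC, α₁, hα₁, α₂, hα₂, hlarge, hsmall⟩ := hw.comparable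
  have hm : 0 < min r 1 := lt_min hr one_pos
  refine ⟨C⁻¹ * min r 1 ^ α₂, by positivity, fun z hz => ?_⟩
  have hmz : min r 1 ≤ ‖z‖ := (min_le_left r 1).trans hz
  rcases le_or_gt ‖z‖ 1 with hz1 | hz1
  · calc C⁻¹ * min r 1 ^ α₂ ≤ C⁻¹ * ‖z‖ ^ α₂ := by gcongr
      _ ≤ w z := (hsmall z hz1).1
  · calc C⁻¹ * min r 1 ^ α₂ ≤ C⁻¹ * ‖z‖ ^ α₁ := by
          gcongr
          exact (Real.rpow_le_one hm.le (min_le_right r 1) hα₂.le).trans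
            (Real.one_le_rpow hz1.le hα₁.le)
      _ ≤ w z := (hlarge z hz1).1

theorem VitaliClass.exists_mem_disjoint {𝒱 : Set (Set (Pt n))} {E F : Set (Pt n)}
    (hV : VitaliClass w 𝒱 E) (hw : IsPseudoNorm A w) {η : ℝ} (hη : 0 < η) {x : Pt n}
    (hx : x ∈ E) (hF : IsClosed F) (hxF : x ∉ F) :
    ∃ V ∈ {V ∈ 𝒱 | 0 < pdiam w V ∧ pdiam w V ≤ ENNReal.ofReal η}, x ∈ V ∧ Disjoint V F := by
  obtain ⟨r, hr, hball⟩ := Metric.isOpen_iff.1 hF.isOpen_compl x hxF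
  obtain ⟨c, hc, hcw⟩ := hw.exists_pos_le_of_le_norm hr
  obtain ⟨V, hV𝒱, hxV, hV0, hVη⟩ := hV x hx (min η (c / 2)) (by positivity)
  refine ⟨V, ⟨hV𝒱, hV0, hVη.trans (ENNReal.ofReal_le_ofReal (min_le_left _ _))⟩, hxV,
    Set.disjoint_left.2 fun y hyV hyF => ?_⟩
  have hxy : r ≤ ‖x - y‖ := by
    by_contra! h
    exact hball (by rwa [Metric.mem_ball, dist_comm, dist_eq_norm]) hyF
  have hwxy : w (x - y) ≤ min η (c / 2) :=
    (ENNReal.ofReal_le_ofReal_iff (by positivity)).1 ((le_pdiam hxV hyV).trans hVη)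
  linarith [hcw _ hxy, min_le_right η (c / 2)]

theorem subset_biUnion_lt_union_enlarge {𝒞 : Set (Set (Pt n))} {E : Set (Pt n)}
    (h𝒞 : ∀ x ∈ E, ∀ F, IsClosed F → x ∉ F → ∃ V ∈ 𝒞, x ∈ V ∧ Disjoint V F)
    (hpos : ∀ V ∈ 𝒞, pdiam w V ≠ 0) {U : ℕ → Set (Pt n)} (hclosed : ∀ i, IsClosed (U i))
    (hmax : ∀ m, ∀ V ∈ 𝒞, (∀ i < m, Disjoint V (U i)) → pdiam w V ≤ 2 * pdiam w (U m))
    {s : ℝ} (hs : 0 < s) (hT : ∑' i, pdiam w (U i) ^ s ≠ ⊤) (m : ℕ) :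
    E ⊆ (⋃ i < m, U i) ∪ ⋃ i, enlarge w (U (i + m)) := by
  intro x hx
  by_cases hxm : x ∈ ⋃ i < m, U i
  · exact Or.inl hxm
  obtain ⟨V, hV, hxV, hVm⟩ :=
    h𝒞 x hx _ ((Set.finite_lt_nat m).isClosed_biUnion fun i _ => hclosed i) hxm
  obtain ⟨j, hmj, hmeet, hle⟩ := exists_le_not_disjoint_of_tsum_ne_top hmax hs hT hV (hpos V hV)
    fun i hi => hVm.mono_right (Set.subset_iUnion₂ (s := fun k (_ : k < m) => U k) i hi)
  refine Or.inr (Set.mem_iUnion.2 ⟨j - m, ?_⟩)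
  rw [Nat.sub_add_cancel hmj]
  exact subset_enlarge_of_not_disjoint hmeet hle hxV

end PseudoNorm

section Hausdorff

variable {n : ℕ} {w : Pt n → ℝ} {s δ : ℝ} {E : Set (Pt n)}

theorem preHw_le_tsum (U : ℕ → Set (Pt n)) (hE : E ⊆ ⋃ i, U i)
    (hU : ∀ i, pdiam w (U i) ≤ ENNReal.ofReal δ) : preHw w s δ E ≤ ∑' i, pdiam w (U i) ^ s :=
  iInf_le_of_le U (iInf_le_of_le hE (iInf_le _ hU))

theorem preHw_le_Hw (hδ : 0 < δ) : preHw w s δ E ≤ Hw w s E :=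
  le_iSup₂ (f := fun δ (_ : 0 < δ) => preHw w s δ E) δ hδ

-- Covers are indexed by `ℕ`, so for `s ≤ 0` every cover has infinitely many terms `≥ 1`.
theorem Hw_eq_top_of_nonpos (hs : s ≤ 0) : Hw w s E = ⊤ := by
  refine top_unique (le_trans ?_ (preHw_le_Hw one_pos))
  refine le_iInf fun U => le_iInf fun _ => le_iInf fun hU => ?_
  calc ⊤ = ∑' _ : ℕ, (1 : ℝ≥0∞) := (ENNReal.tsum_const_eq_top_of_ne_zero one_ne_zero).symm
    _ ≤ ∑' i, pdiam w (U i) ^ s := ENNReal.tsum_le_tsum fun i => by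
        simpa using ENNReal.rpow_le_rpow_of_exponent_ge (by simpa using hU i) hs

theorem exists_Hw_le_preHw_add (hE : Hw w s E ≠ ⊤) {ε : ℝ≥0∞} (hε : ε ≠ 0) :
    ∃ δ > 0, Hw w s E ≤ preHw w s δ E + ε := by
  rcases eq_or_ne (Hw w s E) 0 with h0 | h0
  · exact ⟨1, one_pos, by rw [h0]; exact zero_le⟩
  obtain ⟨δ, hlt⟩ := lt_iSup_iff.1 (ENNReal.sub_lt_self hE h0 hε)
  obtain ⟨hδ, hlt⟩ := lt_iSup_iff.1 hlt
  exact ⟨δ, hδ, tsub_le_iff_right.1 hlt.le⟩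

theorem preHw_le_sum_add_tsum {U V : ℕ → Set (Pt n)} {m : ℕ}
    (hE : E ⊆ (⋃ i < m, U i) ∪ ⋃ i, V i) (hU : ∀ i < m, pdiam w (U i) ≤ ENNReal.ofReal δ)
    (hV : ∀ i, pdiam w (V i) ≤ ENNReal.ofReal δ) :
    preHw w s δ E ≤ ∑ i ∈ Finset.range m, pdiam w (U i) ^ s + ∑' i, pdiam w (V i) ^ s := by
  let W : ℕ → Set (Pt n) := fun i => if i < m then U i else V (i - m)
  have hWU : ∀ i < m, W i = U i := fun i hi => if_pos hi
  have hWV : ∀ i, W (i + m) = V i := fun i => by simp [W]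
  have hcover : E ⊆ ⋃ i, W i := by
    refine hE.trans (Set.union_subset (Set.iUnion₂_subset fun i hi => ?_)
      (Set.iUnion_subset fun i => ?_))
    · rw [← hWU i hi]; exact Set.subset_iUnion W i
    · rw [← hWV i]; exact Set.subset_iUnion W (i + m)
  have hdiam : ∀ i, pdiam w (W i) ≤ ENNReal.ofReal δ := fun i => by
    by_cases hi : i < m
    · rw [hWU i hi]; exact hU i hi
    · simp only [W, if_neg hi]; exact hV _
  calc preHw w s δ E ≤ ∑' i, pdiam w (W i) ^ s := preHw_le_tsum W hcover hdiam
    _ = ∑ i ∈ Finset.range m, pdiam w (W i) ^ s + ∑' i, pdiam w (W (i + m)) ^ s :=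
        (ENNReal.summable.sum_add_tsum_nat_add').symm
    _ = _ := by
        rw [Finset.sum_congr rfl fun i hi => by rw [hWU i (Finset.mem_range.1 hi)]]
        simp only [hWV]

variable {U V : ℕ → Set (Pt n)} {c : ℝ≥0∞}

theorem preHw_le_tsum_of_subset_tail (hE : ∀ m, E ⊆ (⋃ i < m, U i) ∪ ⋃ i, V (i + m))
    (hU : ∀ i, pdiam w (U i) ≤ ENNReal.ofReal δ) (hV : ∀ i, pdiam w (V i) ≤ ENNReal.ofReal δ)
    (hVU : ∀ i, pdiam w (V i) ≤ c * pdiam w (U i)) (hc : c ≠ ⊤) (hs : 0 ≤ s)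
    (hT : ∑' i, pdiam w (U i) ^ s ≠ ⊤) : preHw w s δ E ≤ ∑' i, pdiam w (U i) ^ s := by
  have htail := (ENNReal.tendsto_mul_tsum_nat_add hT
    (ENNReal.rpow_ne_top_of_nonneg hs hc)).const_add (∑' i, pdiam w (U i) ^ s)
  rw [add_zero] at htail
  refine ge_of_tendsto' htail fun m => ?_
  calc preHw w s δ E
      ≤ ∑ i ∈ Finset.range m, pdiam w (U i) ^ s + ∑' i, pdiam w (V (i + m)) ^ s :=
        preHw_le_sum_add_tsum (hE m) (fun i _ => hU i) fun i => hV _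
    _ ≤ ∑' i, pdiam w (U i) ^ s + c ^ s * ∑' i, pdiam w (U (i + m)) ^ s :=
        add_le_add (ENNReal.sum_le_tsum _) (ENNReal.tsum_rpow_le_rpow_mul_tsum hs fun i => hVU _)

theorem Hw_diff_iUnion_eq_zero (hE : ∀ m, E ⊆ (⋃ i < m, U i) ∪ ⋃ i, V (i + m))
    (hVU : ∀ i, pdiam w (V i) ≤ c * pdiam w (U i)) (hc : c ≠ ⊤) (hs : 0 < s)
    (hT : ∑' i, pdiam w (U i) ^ s ≠ ⊤) : Hw w s (E \ ⋃ i, U i) = 0 := by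
  refine le_antisymm (iSup₂_le fun δ hδ => ?_) zero_le
  have hdiam : Tendsto (fun i => c * pdiam w (U i)) atTop (𝓝 0) := by
    have h := (ENNReal.continuous_rpow_const (y := s⁻¹).tendsto 0).comp
      (ENNReal.tendsto_atTop_zero_of_tsum_ne_top hT)
    simp only [Function.comp_def, ENNReal.rpow_rpow_inv hs.ne',
      ENNReal.zero_rpow_of_pos (inv_pos.2 hs)] at h
    simpa using ENNReal.Tendsto.const_mul h (Or.inr hc)
  obtain ⟨m₀, hm₀⟩ := eventually_atTop.1
    (hdiam.eventually (eventually_le_nhds (ENNReal.ofReal_pos.2 hδ)))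
  refine ge_of_tendsto
    (ENNReal.tendsto_mul_tsum_nat_add hT (ENNReal.rpow_ne_top_of_nonneg hs.le hc))
    (eventually_atTop.2 ⟨m₀, fun m hm => ?_⟩)
  have hcover : E \ ⋃ i, U i ⊆ ⋃ i, V (i + m) := fun x hx =>
    (hE m hx.1).resolve_left fun h => hx.2 ((Set.iUnion₂_subset fun i _ => Set.subset_iUnion U i) h)
  calc preHw w s δ (E \ ⋃ i, U i) ≤ ∑' i, pdiam w (V (i + m)) ^ s :=
        preHw_le_tsum _ hcover fun i => (hVU _).trans (hm₀ _ (by omega))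
    _ ≤ c ^ s * ∑' i, pdiam w (U (i + m)) ^ s :=
        ENNReal.tsum_rpow_le_rpow_mul_tsum hs.le fun i => hVU _

end Hausdorff

theorem stmt10_general {n : ℕ} (A : Matrix (Fin n) (Fin n) ℝ)
    (w : Pt n → ℝ) (hw : IsPseudoNorm A w)
    (s : ℝ) (E : Set (Pt n))
    (hfin : Hw w s E < ⊤)
    (𝒱 : Set (Set (Pt n))) (hcl : ∀ U ∈ 𝒱, IsClosed U)
    (hV : VitaliClass w 𝒱 E) (ε : ℝ) (hε : 0 < ε) :
    ∃ 𝒰 : Set (Set (Pt n)), 𝒰 ⊆ 𝒱 ∧ 𝒰.Countable ∧ 𝒰.PairwiseDisjoint id ∧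
      ((∑' U : 𝒰, pdiam w (U : Set (Pt n)) ^ s) = ⊤ ∨
        Hw w s (E \ ⋃₀ 𝒰) = 0) ∧
      Hw w s E ≤ (∑' U : 𝒰, pdiam w (U : Set (Pt n)) ^ s) + ENNReal.ofReal ε := by
  have hs : 0 < s := not_le.1 fun hs => hfin.ne (Hw_eq_top_of_nonpos hs)
  obtain ⟨δ, hδ, hHw⟩ := exists_Hw_le_preHw_add hfin.ne (ENNReal.ofReal_pos.2 hε).ne'
  obtain ⟨c, hc1, hc⟩ := hw.exists_pdiam_enlarge_le
  have hη : 0 < δ / c := div_pos hδ (by linarith)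
  set 𝒞 := {V ∈ 𝒱 | 0 < pdiam w V ∧ pdiam w V ≤ ENNReal.ofReal (δ / c)}
  obtain ⟨U, hU𝒞, hUdisj, hUmax⟩ := exists_pairwise_disjoint_seq_two_mul_le 𝒞 (pdiam w)
    (ne_top_of_le_ne_top ENNReal.ofReal_ne_top (iSup₂_le fun V hV => hV.2.2))
  have hUη : ∀ i, pdiam w (U i) ≤ ENNReal.ofReal (δ / c) := fun i =>
    (hU𝒞 i).elim (·.2.2) fun h => by simp [h]
  refine ⟨U '' {i | (U i).Nonempty}, ?_, (Set.to_countable _).image U,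
    hUdisj.range_pairwise.mono (Set.image_subset_range _ _), ?_⟩
  · rintro _ ⟨i, hi, rfl⟩
    exact ((hU𝒞 i).resolve_right hi.ne_empty).1
  rw [tsum_image_nonempty hUdisj (f := fun V => pdiam w V ^ s) (by simp [hs]),
    sUnion_image_nonempty]
  rcases eq_or_ne (∑' i, pdiam w (U i) ^ s) ⊤ with hT | hT
  · simp [hT]
  have hcov := subset_biUnion_lt_union_enlarge
    (fun x hx F hF hxF => hV.exists_mem_disjoint hw hη hx hF hxF) (fun V hV => hV.2.1.ne')
    (fun i => (hU𝒞 i).elim (fun h => hcl _ h.1) fun h => h ▸ isClosed_empty) hUmax hs hT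
  have hcδ : ENNReal.ofReal c * ENNReal.ofReal (δ / c) = ENNReal.ofReal δ := by
    rw [← ENNReal.ofReal_mul (by linarith), mul_div_cancel₀ _ (by linarith)]
  refine ⟨Or.inr (Hw_diff_iUnion_eq_zero hcov (fun i => hc _) ENNReal.ofReal_ne_top hs hT),
    hHw.trans (add_le_add_left (preHw_le_tsum_of_subset_tail hcov
      (fun i => (hUη i).trans (ENNReal.ofReal_le_ofReal (div_le_self hδ.le hc1)))
      (fun i => (hc _).trans ((mul_le_mul_right (hUη i) _).trans_eq hcδ)) (fun i => hc _)
      ENNReal.ofReal_ne_top hs.le hT) _)⟩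

/-- Vitali covering theorem (b) for the pseudo Hausdorff measure. -/
theorem stmt10 {n : ℕ} (hn : 0 < n) (A : Matrix (Fin n) (Fin n) ℝ)
    (hA : IsExpandingMatrix A)
    (hAnorm : ∀ x : Pt n, ‖x‖ ≤ ‖mapp A x‖)
    (hAeq : ∀ x : Pt n, ‖x‖ = ‖mapp A x‖ → x = 0)
    (w : Pt n → ℝ) (hw : IsPseudoNorm A w)
    (s : ℝ) (hs : 0 ≤ s) (E : Set (Pt n)) (hE : HwMeasurable w s E)
    (hfin : Hw w s E < ⊤)
    (𝒱 : Set (Set (Pt n))) (hcl : ∀ U ∈ 𝒱, IsClosed U)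
    (hV : VitaliClass w 𝒱 E) (ε : ℝ) (hε : 0 < ε) :
    ∃ 𝒰 : Set (Set (Pt n)), 𝒰 ⊆ 𝒱 ∧ 𝒰.Countable ∧ 𝒰.PairwiseDisjoint id ∧
      ((∑' U : 𝒰, pdiam w (U : Set (Pt n)) ^ s) = ⊤ ∨
        Hw w s (E \ ⋃₀ 𝒰) = 0) ∧
      Hw w s E ≤ (∑' U : 𝒰, pdiam w (U : Set (Pt n)) ^ s) + ENNReal.ofReal ε :=
  stmt10_general A w hw s E hfin 𝒱 hcl hV ε hε
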